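/- For a tree-like multiset t over F and any f in the support of flat_F(t), there is a unique multiset ingredient of t (where t itself counts as an ingredient) that is a tree-like multiset whose root is f. -/

import Mathlib

namespace CFDPaper

noncomputable section

attribute [local instance] Classical.decEq
attribute [local instance] Classical.propDecidable

/-- Depth-indexed hereditary finite multisets: `HMd A n` models the class `M_{n+1}(A)`
of the cumulative hierarchy of finite multisets over the urelements `A`. -/
@[reducible] def HMd (A : Type) : ℕ → Type
  | 0 => Multiset A
  | n + 1 => Multiset (A ⊕ HMd A n)

variable {A B F : Type}

instance instAddHMd (A : Type) (n : ℕ) : Add (HMd A n) :=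
  match n with
  | 0 => inferInstanceAs (Add (Multiset A))
  | n + 1 => inferInstanceAs (Add (Multiset (A ⊕ HMd A n)))

/-- The canonical inclusion `M_{n+1}(A) ⊆ M_{n+2}(A)`. -/
def HMd.up : ∀ n : ℕ, HMd A n → HMd A (n + 1)
  | 0, m => ((m : Multiset A).map (Sum.inl : A → A ⊕ HMd A 0) : Multiset (A ⊕ HMd A 0))
  | n + 1, m => ((m : Multiset (A ⊕ HMd A n)).map (Sum.map id (HMd.up n)) :
      Multiset (A ⊕ HMd A (n + 1)))

/-- Iterated inclusion along `k ≤ n`. -/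
def HMd.liftLe {k n : ℕ} (h : k ≤ n) (m : HMd A k) : HMd A n :=
  Nat.leRecOn h (fun {i} x => HMd.up i x) m

/-- `m` (living at some level of the hierarchy) already appears at level `r`. -/
def comesFrom (r : ℕ) (m : Σ n, HMd A n) : Prop :=
  ∃ (h : r ≤ m.1) (x : HMd A r), HMd.liftLe h x = m.2

/-- The rank of a hereditary multiset: least level of the hierarchy where it occurs
(`rank m = r` corresponds to paper-rank `r + 1`). -/
def rank (m : Σ n, HMd A n) : ℕ := sInf {r | comesFrom r m}

/-- Equality of hereditary multisets living at different levels, via lifting. -/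
def hmEq {k n : ℕ} (x : HMd A k) (y : HMd A n) : Prop :=
  HMd.liftLe (le_max_left k n) x = HMd.liftLe (le_max_right k n) y

/-- Membership of a multiset in the domain (support) of a higher-level multiset. -/
def HMd.Memb {n : ℕ} (x : HMd A n) (m : HMd A (n + 1)) : Prop :=
  Sum.inr x ∈ (m : Multiset (A ⊕ HMd A n))

/-- The flattening function: flat multiplicity of each urelement. -/
def HMd.flat : ∀ {n : ℕ}, HMd A n → Multiset A
  | 0, m => (m : Multiset A)
  | n + 1, m => (m : Multiset (A ⊕ HMd A n)).bind fun e =>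
      match e with
      | Sum.inl a => {a}
      | Sum.inr x => HMd.flat (n := n) x

/-- Top-level multiplicity of an urelement. -/
def HMd.acount : ∀ {n : ℕ}, F → HMd F n → ℕ
  | 0, f, m => (m : Multiset F).count f
  | _ + 1, f, m => (m : Multiset _).count (Sum.inl f)

/-- The multiset-ingredient relation (transitive closure of domain membership). -/
inductive Ingr (A : Type) : ∀ {k n : ℕ}, HMd A k → HMd A n → Prop
  | mem {n : ℕ} {x : HMd A n} {m : HMd A (n + 1)} : x.Memb m → Ingr A x m
  | tail {k n : ℕ} {x : HMd A k} {y : HMd A n} {m : HMd A (n + 1)} :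
      Ingr A x y → y.Memb m → Ingr A x m

/-- Disjointness of flattened domains. -/
def FDisj {k n : ℕ} (x : HMd A k) (y : HMd A n) : Prop :=
  ∀ a, a ∈ x.flat → a ∉ y.flat

/-- The singleton multiset `⌈f⌉` at each level. -/
def HMd.single : ∀ n : ℕ, A → HMd A n
  | 0, f => ({f} : Multiset A)
  | _ + 1, f => ({Sum.inl f} : Multiset _)

/-- `⌈xᶜ⌉` : the multiset containing `x` with multiplicity `c`. -/
def HMd.rep {n : ℕ} (c : ℕ) (x : HMd A n) : HMd A (n + 1) :=
  (Multiset.replicate c (Sum.inr x) : Multiset (A ⊕ HMd A n))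

/-- `⌈t₁^{n₁}, …, t_k^{n_k}⌉` built from a list of tree-multiplicity pairs. -/
def HMd.ofList {n : ℕ} (l : List (HMd A n × ℕ)) : HMd A (n + 1) :=
  ((l.map fun p => Multiset.replicate p.2 (Sum.inr p.1 : A ⊕ HMd A n)).sum :
    Multiset (A ⊕ HMd A n))

/-- A "group" multiset: one whose domain contains no urelements. -/
def HMd.NoAtoms {n : ℕ} (g : HMd A (n + 1)) : Prop :=
  ∀ a : A, Sum.inl a ∉ (g : Multiset (A ⊕ HMd A n))

/-- Tree-like multisets over `F` (Definition: singleton, solitary-extension,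
group-extension; closed under the cumulative inclusions). -/
inductive TreeLike (F : Type) : ∀ n : ℕ, HMd F n → Prop
  | sing (n : ℕ) (f : F) : TreeLike F n (HMd.single n f)
  | up {n : ℕ} {t : HMd F n} : TreeLike F n t → TreeLike F (n + 1) (HMd.up n t)
  | sol {n : ℕ} {t₁ : HMd F (n + 1)} {t₂ : HMd F n} (c : ℕ) :
      TreeLike F (n + 1) t₁ → TreeLike F n t₂ → FDisj t₁ t₂ →
      TreeLike F (n + 1) (t₁ + HMd.rep c t₂)
  | grp {n : ℕ} {t : HMd F (n + 1)} (l : List (HMd F n × ℕ)) :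
      TreeLike F (n + 1) t →
      (∀ p ∈ l, TreeLike F n p.1) →
      (∀ p ∈ l, FDisj t p.1) →
      l.Pairwise (fun p q => FDisj p.1 q.1) →
      TreeLike F (n + 2) (HMd.up (n + 1) t + HMd.rep 1 (HMd.ofList l))

/-- `x` is an ingredient of `t`, or `t` itself. -/
def IngrE {k n : ℕ} (x : HMd A k) (t : HMd A n) : Prop :=
  Ingr A x t ∨ hmEq x t

/-- `x` occurs (up to lifting) in the domain of `m`. -/
def MemUpTo {k n : ℕ} (x : HMd A k) (m : HMd A (n + 1)) : Prop :=
  ∃ y : HMd A n, HMd.Memb y m ∧ hmEq x y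

/-- `x` is the tree-like ingredient of `t` induced by (i.e. with root) `f`. -/
def RootedIngr {n : ℕ} (t : HMd F n) (f : F) {k : ℕ} (x : HMd F k) : Prop :=
  IngrE x t ∧ TreeLike F k x ∧ 0 < HMd.acount f x

/-- `p` is the parent of `f` in the tree-like multiset `t`: the induced multiset of `f`
lies in the domain of the multiset induced by `p`, directly or inside a group ingredient. -/
def IsParentIn {n : ℕ} (t : HMd F n) (f p : F) : Prop :=
  ∃ (kp : ℕ) (xp : HMd F (kp + 1)), RootedIngr t p xp ∧
    ∃ (kf : ℕ) (xf : HMd F kf), RootedIngr t f xf ∧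
      (MemUpTo xf xp ∨
        ∃ (kg : ℕ) (g : HMd F (kg + 1)), MemUpTo g xp ∧ HMd.NoAtoms g ∧ MemUpTo xf g)

/-- `f` occurs grouped in `t`: some group ingredient of `t` has a member with root `f`. -/
def InGroupOf {n : ℕ} (t : HMd F n) (f : F) : Prop :=
  ∃ (kg : ℕ) (g : HMd F (kg + 1)), Ingr F g t ∧ HMd.NoAtoms g ∧
    ∃ x : HMd F kg, HMd.Memb x g ∧ TreeLike F kg x ∧ 0 < HMd.acount f x

/-- Relaxation: set every multiplicity, at every nesting level, to 1. -/
def HMd.relax : ∀ {n : ℕ}, HMd A n → HMd A n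
  | 0, m => ((m : Multiset A).dedup : Multiset A)
  | n + 1, m =>
      (((m : Multiset (A ⊕ HMd A n)).map (Sum.map id (HMd.relax (n := n)))).dedup :
        Multiset (A ⊕ HMd A n))

/-- Renaming of urelements. -/
def HMd.mapA (g : A → B) : ∀ {n : ℕ}, HMd A n → HMd B n
  | 0, m => ((m : Multiset A).map g : Multiset B)
  | n + 1, m => ((m : Multiset (A ⊕ HMd A n)).map (Sum.map g (HMd.mapA g (n := n))) :
      Multiset (B ⊕ HMd B n))

/-- Cardinality-based feature diagrams over the feature universe `F`. -/
structure CFD (F : Type) where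
  feat : Finset F
  root : F
  root_mem : root ∈ feat
  parent : F → F
  parent_mem : ∀ f ∈ feat, f ≠ root → parent f ∈ feat
  reaches : ∀ f ∈ feat,
    Relation.ReflTransGen (fun a b => a ∈ feat ∧ a ≠ root ∧ parent a = b) f root
  groups : Finset (Finset F)
  groups_sub : ∀ G ∈ groups, ∀ f ∈ G, f ∈ feat ∧ f ≠ root
  groups_card : ∀ G ∈ groups, 1 < G.card
  groups_sib : ∀ G ∈ groups, ∀ f ∈ G, ∀ g ∈ G, parent f = parent g
  groups_disj : ∀ G ∈ groups, ∀ G' ∈ groups, G = G' ∨ Disjoint G G'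
  card : F → Set ℕ
  gcard : Finset F → Set ℕ
  card_ok : ∀ f ∈ feat, f ≠ root → (card f).Nonempty ∧ card f ≠ {0}
  gcard_ok : ∀ G ∈ groups,
    (gcard G).Finite ∧ (gcard G).Nonempty ∧ gcard G ≠ {0} ∧ ∀ c ∈ gcard G, c ≤ G.card
  parent_junk : ∀ f, ¬(f ∈ feat ∧ f ≠ root) → parent f = root
  card_junk : ∀ f, ¬(f ∈ feat ∧ f ≠ root) → card f = ∅
  gcard_junk : ∀ G, G ∉ groups → gcard G = ∅

variable {F : Type}

/-- The solitary (non-grouped) children of `f` in `D`. -/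
def solChildren (D : CFD F) (f : F) : Finset F :=
  D.feat.filter fun s => s ≠ D.root ∧ D.parent s = f ∧ ∀ G ∈ D.groups, s ∉ G

/-- The groups whose members are children of `f` in `D`. -/
def childGroups (D : CFD F) (f : F) : Finset (Finset F) :=
  D.groups.filter fun G => ∃ s ∈ G, D.parent s = f

/-- The hereditary multiset assembled from a choice of sub-products. -/
def prodMS (D : CFD F) (f : F) {n : ℕ} (hs : F → HMd F n) (hc : F → ℕ)
    (hg : Finset F → HMd F n) : HMd F (n + 1) :=
  ((({Sum.inl f} : Multiset (F ⊕ HMd F n))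
    + ((solChildren D f).val.map fun s =>
        Multiset.replicate (hc s) (Sum.inr (hs s) : F ⊕ HMd F n)).sum
    + ((childGroups D f).val.map fun G => (Sum.inr (hg G) : F ⊕ HMd F n)))
    : Multiset (F ⊕ HMd F n))

/-- The hereditary multiset assembled from a group selection. -/
def grpMS {n : ℕ} (sel : Finset F) (hs : F → HMd F n) (hc : F → ℕ) : HMd F (n + 1) :=
  ((sel.val.map fun s =>
      Multiset.replicate (hc s) (Sum.inr (hs s) : F ⊕ HMd F n)).sum :
    Multiset (F ⊕ HMd F n))

mutual
  /-- `HierProd D f m` : `m` is a hierarchical product of the subdiagram of `D` induced by `f`. -/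
  inductive HierProd {F : Type} (D : CFD F) : F → ∀ {n : ℕ}, HMd F n → Prop
    | mk {n : ℕ} (f : F) (hs : F → HMd F n) (hc : F → ℕ) (hg : Finset F → HMd F n)
        (hf : f ∈ D.feat)
        (hsol : ∀ s ∈ solChildren D f, HierProd D s (hs s))
        (hsolc : ∀ s ∈ solChildren D f, hc s ∈ D.card s)
        (hgrp : ∀ G ∈ childGroups D f, GroupProd D G (hg G)) :
        HierProd D f (prodMS D f hs hc hg)
  /-- `GroupProd D G m` : `m` is a hierarchical product associated with the group `G` of `D`. -/
  inductive GroupProd {F : Type} (D : CFD F) : Finset F → ∀ {n : ℕ}, HMd F n → Prop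
    | mk {n : ℕ} (G sel : Finset F) (hs : F → HMd F n) (hc : F → ℕ)
        (hsub : sel ⊆ G) (hG : G ∈ D.groups) (hcard : sel.card ∈ D.gcard G)
        (hmem : ∀ s ∈ sel, HierProd D s (hs s))
        (hmemc : ∀ s ∈ sel, hc s ∈ D.card s) :
        GroupProd D G (grpMS sel hs hc)
end

/-- The hierarchical theory of `D` (as a set of hereditary multisets at all levels). -/
def ProductsSet (D : CFD F) : Set (Σ n, HMd F n) := {m | HierProd D D.root m.2}

/-- A set of (tree-like) multisets is mergeable if a single CFD represents all of them. -/
def Mergeable (U : Set (Σ n, HMd F n)) : Prop :=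
  ∃ D : CFD F, ∀ m ∈ U, HierProd D D.root m.2

/-- A set is completely mergeable if it is exactly the hierarchical theory of some CFD. -/
def CompletelyMergeable (U : Set (Σ n, HMd F n)) : Prop :=
  ∃ D : CFD F, U = ProductsSet D

/-- Pointwise relaxation of a set of hereditary multisets. -/
def relaxSet (U : Set (Σ n, HMd F n)) : Set (Σ n, HMd F n) :=
  {x | ∃ m ∈ U, x = ⟨m.1, HMd.relax m.2⟩}

/-- The flat products of `D` (Definition of flat theory). -/
def FlatProd (D : CFD F) (m : Multiset F) : Prop :=
  (∀ f ∈ m, f ∈ D.feat) ∧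
  m.count D.root = 1 ∧
  (∀ f ∈ D.feat, f ≠ D.root → 0 < m.count f →
    ∃ c ∈ D.card f, m.count f = c * m.count (D.parent f)) ∧
  (∀ f ∈ D.feat, f ≠ D.root → (∀ G ∈ D.groups, f ∉ G) → 0 ∉ D.card f →
    0 < m.count (D.parent f) → 0 < m.count f) ∧
  (∀ G ∈ D.groups, ∀ g ∈ G, 0 < m.count (D.parent g) →
    (G.filter fun f => 0 < m.count f).card ∈ D.gcard G)

/-- Rooted (possibly countably infinite) trees with explicit parent function. -/
structure RTree (N : Type) where
  nodes : Set N
  countable : nodes.Countable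
  root : N
  root_mem : root ∈ nodes
  parent : N → N
  parent_mem : ∀ f ∈ nodes, f ≠ root → parent f ∈ nodes
  reaches : ∀ f ∈ nodes,
    Relation.ReflTransGen (fun a b => a ∈ nodes ∧ a ≠ root ∧ parent a = b) f root


/-!
Induction on the construction of `t`. Existence: `f` is either an urelement of `t` itself or
lies in the flattening of one of the tree-like pieces `t` is built from, whose induced
multiset is then an ingredient of `t`. Uniqueness holds for every ingredient containing `f`
as an urelement, tree-like or not: the pieces of a solitary or group extension have disjoint
flattenings, so all such ingredients lie in one piece; and if `t` itself contains `f` as an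
urelement, no proper ingredient `x` of `t` can, because the occurrences of `f` in `flat x`
and the top-level ones of `t` would be counted separately in `flat t`.
-/

theorem HMd.up_injective : ∀ n : ℕ, Function.Injective (HMd.up (A := A) n)
  | 0 => Multiset.map_injective Sum.inl_injective
  | n + 1 => Multiset.map_injective
      (Sum.map_injective.mpr ⟨Function.injective_id, HMd.up_injective n⟩)

theorem HMd.liftLe_self {n : ℕ} (h : n ≤ n) (x : HMd A n) : HMd.liftLe h x = x :=
  Nat.leRecOn_self x

theorem HMd.liftLe_liftLe {k m n : ℕ} (h₁ : k ≤ m) (h₂ : m ≤ n) (x : HMd A k) :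
    HMd.liftLe h₂ (HMd.liftLe h₁ x) = HMd.liftLe (h₁.trans h₂) x :=
  (Nat.leRecOn_trans h₁ h₂ x).symm

theorem HMd.liftLe_injective {k n : ℕ} (h : k ≤ n) :
    Function.Injective (HMd.liftLe (A := A) h) :=
  Nat.leRecOn_injective h _ HMd.up_injective

theorem HMd.liftLe_eq_of_up_eq {β : Type} (φ : ∀ {n : ℕ}, HMd A n → β)
    (hφ : ∀ n (x : HMd A n), φ (HMd.up n x) = φ x) {k n : ℕ} (h : k ≤ n) (x : HMd A k) :
    φ (HMd.liftLe h x) = φ x := by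
  induction n, h using Nat.le_induction with
  | base => rw [HMd.liftLe_self]
  | succ n hkn ih => rw [HMd.liftLe, Nat.leRecOn_succ hkn, hφ, ← ih]; rfl

theorem hmEq_of_liftLe_eq {k n N : ℕ} {x : HMd A k} {y : HMd A n} (hk : k ≤ N) (hn : n ≤ N)
    (h : HMd.liftLe hk x = HMd.liftLe hn y) : hmEq x y := by
  apply HMd.liftLe_injective (max_le hk hn)
  rwa [HMd.liftLe_liftLe, HMd.liftLe_liftLe]

theorem hmEq.liftLe_eq {k n : ℕ} {x : HMd A k} {y : HMd A n} (h : hmEq x y)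
    {N : ℕ} (hk : k ≤ N) (hn : n ≤ N) : HMd.liftLe hk x = HMd.liftLe hn y := by
  have h' := congrArg (HMd.liftLe (max_le hk hn)) h
  rwa [HMd.liftLe_liftLe, HMd.liftLe_liftLe] at h'

theorem hmEq_refl {k : ℕ} (x : HMd A k) : hmEq x x := rfl

theorem hmEq.symm {k n : ℕ} {x : HMd A k} {y : HMd A n} (h : hmEq x y) : hmEq y x :=
  hmEq_of_liftLe_eq _ _ (h.liftLe_eq (le_max_left k n) (le_max_right k n)).symm

theorem hmEq.trans {k m n : ℕ} {x : HMd A k} {y : HMd A m} {z : HMd A n}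
    (h₁ : hmEq x y) (h₂ : hmEq y z) : hmEq x z := by
  have hk : k ≤ max k (max m n) := le_max_left _ _
  have hm : m ≤ max k (max m n) := (le_max_left _ _).trans (le_max_right _ _)
  have hn : n ≤ max k (max m n) := (le_max_right _ _).trans (le_max_right _ _)
  exact hmEq_of_liftLe_eq hk hn ((h₁.liftLe_eq hk hm).trans (h₂.liftLe_eq hm hn))

theorem hmEq.eq_of_up_eq {β : Type} (φ : ∀ {n : ℕ}, HMd A n → β)
    (hφ : ∀ n (x : HMd A n), φ (HMd.up n x) = φ x) {k n : ℕ} {x : HMd A k} {y : HMd A n}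
    (h : hmEq x y) : φ x = φ y := by
  have h' := congrArg φ h
  rwa [HMd.liftLe_eq_of_up_eq φ hφ, HMd.liftLe_eq_of_up_eq φ hφ] at h'

theorem hmEq_up {n : ℕ} (x : HMd A n) : hmEq (HMd.up n x) x :=
  hmEq_of_liftLe_eq (N := n + 1) le_rfl n.le_succ
    (by rw [HMd.liftLe_self, HMd.liftLe, Nat.leRecOn_succ'])

theorem HMd.flat_up : ∀ (n : ℕ) (x : HMd A n), (HMd.up n x).flat = x.flat
  | 0, x => by
      simp only [HMd.up, HMd.flat, Multiset.bind_map]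
      exact Multiset.bind_singleton x id |>.trans (Multiset.map_id x)
  | n + 1, x => by
      simp only [HMd.up, HMd.flat, Multiset.bind_map]
      refine Multiset.bind_congr fun e _ => ?_
      cases e with
      | inl a => rfl
      | inr y => exact HMd.flat_up n y

-- `acount` counts with the classical `DecidableEq` instance, hence `convert`
theorem HMd.acount_up : ∀ (n : ℕ) (x : HMd F n) (f : F), (HMd.up n x).acount f = x.acount f
  | 0, x, f => by
      rw [HMd.up, HMd.acount, HMd.acount]
      have := Multiset.count_map_eq_count' (Sum.inl : F → F ⊕ HMd F 0) x Sum.inl_injective f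
      convert this
  | n + 1, x, f => by
      rw [HMd.up, HMd.acount, HMd.acount]
      have := Multiset.count_map_eq_count' _ x
        (Sum.map_injective.mpr ⟨Function.injective_id, HMd.up_injective n⟩) (Sum.inl f)
      rw [Sum.map_inl, id] at this
      convert this

theorem hmEq.flat_eq {k n : ℕ} {x : HMd A k} {y : HMd A n} (h : hmEq x y) :
    x.flat = y.flat :=
  h.eq_of_up_eq HMd.flat HMd.flat_up

theorem hmEq.acount_eq {k n : ℕ} {x : HMd F k} {y : HMd F n} (h : hmEq x y) (f : F) :
    x.acount f = y.acount f :=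
  h.eq_of_up_eq (HMd.acount f) (fun n x => HMd.acount_up n x f)

theorem HMd.flat_add {n : ℕ} (m₁ m₂ : HMd A (n + 1)) :
    HMd.flat (n := n + 1) (m₁ + m₂) = HMd.flat (n := n + 1) m₁ + HMd.flat (n := n + 1) m₂ :=
  Multiset.add_bind _ _ _

theorem HMd.acount_add {n : ℕ} (f : F) (m₁ m₂ : HMd F (n + 1)) :
    HMd.acount (n := n + 1) f (m₁ + m₂)
      = HMd.acount (n := n + 1) f m₁ + HMd.acount (n := n + 1) f m₂ :=
  Multiset.count_add _ _ _

theorem HMd.flat_cons {n : ℕ} (y : HMd A n) (m : HMd A (n + 1)) :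
    HMd.flat (n := n + 1) (Sum.inr y ::ₘ m) = y.flat + HMd.flat (n := n + 1) m :=
  Multiset.cons_bind _ _ _

theorem HMd.acount_cons {n : ℕ} (f : F) (y : HMd F n) (m : HMd F (n + 1)) :
    HMd.acount (n := n + 1) f (Sum.inr y ::ₘ m) = HMd.acount (n := n + 1) f m :=
  Multiset.count_cons_of_ne Sum.inl_ne_inr _

theorem HMd.acount_le_count_flat : ∀ {n : ℕ} (x : HMd F n) (f : F),
    x.acount f ≤ x.flat.count f
  | 0, _, _ => le_rfl
  | n + 1, x, f => by
      induction x using Multiset.induction_on with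
      | empty => exact le_rfl
      | cons e s ih =>
        cases e with
        | inl a =>
          have hflat : HMd.flat (n := n + 1) (Sum.inl a ::ₘ s) = a ::ₘ HMd.flat (n := n + 1) s :=
            Multiset.cons_bind _ _ _
          have hcount : HMd.acount (n := n + 1) f (Sum.inl a ::ₘ s)
              = Multiset.count (Sum.inl f) (Sum.inl a ::ₘ s) := rfl
          rw [hflat, hcount, Multiset.count_cons, Multiset.count_cons]
          have : (Sum.inl f : F ⊕ HMd F n) = Sum.inl a ↔ f = a := Sum.inl_injective.eq_iff
          simp only [this]
          exact Nat.add_le_add_right ih _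
        | inr y =>
          rw [HMd.flat_cons, HMd.acount_cons, Multiset.count_add]
          exact ih.trans (Nat.le_add_left _ _)

theorem HMd.mem_flat_of_acount_pos {n : ℕ} {x : HMd F n} {f : F} (h : 0 < x.acount f) :
    f ∈ x.flat :=
  Multiset.count_pos.mp (h.trans_le (HMd.acount_le_count_flat x f))

theorem HMd.flat_single : ∀ (n : ℕ) (a : A), (HMd.single n a).flat = {a}
  | 0, _ => rfl
  | _ + 1, _ => Multiset.singleton_bind _ _

theorem HMd.acount_single : ∀ (n : ℕ) (f : F), (HMd.single n f).acount f = 1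
  | 0, _ => Multiset.count_singleton_self _
  | _ + 1, _ => Multiset.count_singleton_self _

theorem HMd.memb_rep {n : ℕ} {y x : HMd A n} {c : ℕ} :
    y.Memb (HMd.rep c x) ↔ c ≠ 0 ∧ y = x := by
  rw [HMd.Memb, HMd.rep, Multiset.mem_replicate, Sum.inr.injEq]

theorem HMd.flat_rep {n : ℕ} (c : ℕ) (x : HMd A n) : (HMd.rep c x).flat = c • x.flat := by
  induction c with
  | zero => rfl
  | succ c ih =>
    rw [succ_nsmul', ← ih]
    exact HMd.flat_cons x (HMd.rep c x)

theorem HMd.acount_rep {n : ℕ} (f : F) (c : ℕ) (x : HMd F n) : (HMd.rep c x).acount f = 0 :=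
  Multiset.count_eq_zero.mpr fun h => Sum.inl_ne_inr (Multiset.eq_of_mem_replicate h)

theorem HMd.ofList_cons {n : ℕ} (p : HMd A n × ℕ) (l : List (HMd A n × ℕ)) :
    HMd.ofList (p :: l) = HMd.rep p.2 p.1 + HMd.ofList l := by
  rw [HMd.ofList, List.map_cons, List.sum_cons]
  rfl

theorem HMd.memb_ofList {n : ℕ} {l : List (HMd A n × ℕ)} {y : HMd A n} :
    y.Memb (HMd.ofList l) ↔ ∃ p ∈ l, p.2 ≠ 0 ∧ y = p.1 := by
  induction l with
  | nil => simp [HMd.Memb, HMd.ofList]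
  | cons p l ih =>
    rw [HMd.ofList_cons, HMd.Memb, Multiset.mem_add, ← HMd.Memb, ← HMd.Memb, ih,
      HMd.memb_rep, List.exists_mem_cons_iff]

theorem HMd.mem_flat_ofList {n : ℕ} {a : A} {l : List (HMd A n × ℕ)} :
    a ∈ (HMd.ofList l).flat ↔ ∃ p ∈ l, p.2 ≠ 0 ∧ a ∈ p.1.flat := by
  induction l with
  | nil => simp [HMd.ofList, HMd.flat]
  | cons p l ih =>
    rw [HMd.ofList_cons, HMd.flat_add, Multiset.mem_add, HMd.flat_rep, Multiset.mem_nsmul, ih,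
      List.exists_mem_cons_iff]

theorem HMd.acount_ofList {n : ℕ} (f : F) : ∀ l : List (HMd F n × ℕ), (HMd.ofList l).acount f = 0
  | [] => rfl
  | p :: l => by rw [HMd.ofList_cons, HMd.acount_add, HMd.acount_ofList f l, HMd.acount_rep]

theorem FDisj.symm {k n : ℕ} {x : HMd A k} {y : HMd A n} (h : FDisj x y) : FDisj y x :=
  fun a hay hax => h a hax hay

theorem Ingr.trans {j k n : ℕ} {x : HMd A j} {y : HMd A k} {m : HMd A n}
    (hxy : Ingr A x y) (hym : Ingr A y m) : Ingr A x m := by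
  induction hym with
  | mem h => exact .tail hxy h
  | tail _ h ih => exact .tail (ih hxy) h

theorem Ingr.add_right {k n : ℕ} {x : HMd A k} {m₁ : HMd A (n + 1)} (h : Ingr A x m₁)
    (m₂ : HMd A (n + 1)) : Ingr A x (m₁ + m₂) := by
  cases h with
  | mem h => exact .mem (Multiset.mem_add.mpr (.inl h))
  | tail hxy h => exact .tail hxy (Multiset.mem_add.mpr (.inl h))

theorem HMd.Memb.count_flat_add_acount_le {n : ℕ} {y : HMd F n} {m : HMd F (n + 1)}
    (h : y.Memb m) (f : F) : y.flat.count f + m.acount f ≤ m.flat.count f := by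
  obtain ⟨m', rfl⟩ := Multiset.exists_cons_of_mem h
  rw [HMd.flat_cons, HMd.acount_cons, Multiset.count_add]
  exact Nat.add_le_add_left (HMd.acount_le_count_flat (n := n + 1) m' f) _

theorem Ingr.count_flat_add_acount_le {k n : ℕ} {x : HMd F k} {m : HMd F n} (h : Ingr F x m)
    (f : F) : x.flat.count f + m.acount f ≤ m.flat.count f := by
  induction h with
  | mem h => exact h.count_flat_add_acount_le f
  | tail _ h ih =>
    have := h.count_flat_add_acount_le f
    omega

theorem IngrE.mem_flat {k n : ℕ} {x : HMd F k} {m : HMd F n} (h : IngrE x m) {f : F}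
    (hf : f ∈ x.flat) : f ∈ m.flat := by
  rcases h with h | h
  · have := h.count_flat_add_acount_le f
    exact Multiset.count_pos.mp ((Multiset.count_pos.mpr hf).trans_le (by omega))
  · rwa [← h.flat_eq]

theorem not_ingr_single {k : ℕ} {x : HMd A k} : ∀ (n : ℕ) (a : A), ¬ Ingr A x (HMd.single n a)
  | 0, _, h => by cases h
  | _ + 1, _, h => by
      cases h with
      | mem h => simp [HMd.single, HMd.Memb] at h
      | tail _ h => simp [HMd.single, HMd.Memb] at h

theorem HMd.Memb.up {n : ℕ} {y : HMd A n} {m : HMd A (n + 1)} (h : y.Memb m) :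
    (HMd.up n y).Memb (HMd.up (n + 1) m) :=
  Multiset.mem_map_of_mem _ h

theorem Ingr.up {k n : ℕ} {x : HMd A k} {m : HMd A n} (h : Ingr A x m) :
    Ingr A (HMd.up k x) (HMd.up n m) := by
  induction h with
  | mem h => exact .mem h.up
  | tail _ h ih => exact .tail ih h.up

theorem HMd.not_memb_up_zero {y m : HMd A 0} : ¬ y.Memb (HMd.up 0 m) := fun h => by
  obtain ⟨a, _, ha⟩ := Multiset.mem_map.mp h
  exact Sum.inl_ne_inr ha

theorem HMd.Memb.exists_of_up {n : ℕ} {y m : HMd A (n + 1)} (h : y.Memb (HMd.up (n + 1) m)) :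
    ∃ z : HMd A n, z.Memb m ∧ y = HMd.up n z := by
  obtain ⟨_ | z, hz, he⟩ := Multiset.mem_map.mp h
  · exact absurd he Sum.inl_ne_inr
  · exact ⟨z, hz, (Sum.inr_injective he).symm⟩

theorem Ingr.exists_of_up {k n : ℕ} {x : HMd A k} {m : HMd A n} (h : Ingr A x (HMd.up n m)) :
    ∃ (p : ℕ) (x' : HMd A p), hmEq x x' ∧ Ingr A x' m := by
  -- `Ingr` cannot be inducted on at the non-variable level `n + 1`, so the level is generalised
  suffices ∀ {N : ℕ} {M : HMd A N}, Ingr A x M → ∀ (n : ℕ) (m : HMd A n), N = n + 1 →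
      HEq M (HMd.up n m) → ∃ (p : ℕ) (x' : HMd A p), hmEq x x' ∧ Ingr A x' m from
    this h n m rfl HEq.rfl
  clear h
  intro N M h
  induction h with
  | mem hx =>
    rintro (_ | n) m ⟨⟩ ⟨⟩
    · exact absurd hx HMd.not_memb_up_zero
    · obtain ⟨z, hz, rfl⟩ := hx.exists_of_up
      exact ⟨n, z, hmEq_up z, .mem hz⟩
  | tail _ hy ih =>
    rintro (_ | n) m ⟨⟩ ⟨⟩
    · exact absurd hy HMd.not_memb_up_zero
    · obtain ⟨z, hz, rfl⟩ := hy.exists_of_up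
      obtain ⟨p, x', hx', hxz⟩ := ih n z rfl HEq.rfl
      exact ⟨p, x', hx', .tail hxz hz⟩

theorem Ingr.of_add_rep {k n : ℕ} {x : HMd A k} {t₁ : HMd A (n + 1)} {t₂ : HMd A n} {c : ℕ}
    (h : Ingr A x (t₁ + HMd.rep c t₂)) : Ingr A x t₁ ∨ IngrE x t₂ := by
  cases h with
  | mem h =>
    rcases Multiset.mem_add.mp h with h | h
    · exact .inl (.mem h)
    · exact .inr (.inr ((HMd.memb_rep.mp h).2 ▸ hmEq_refl _))
  | tail hxy h =>
    rcases Multiset.mem_add.mp h with h | h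
    · exact .inl (.tail hxy h)
    · exact .inr (.inl ((HMd.memb_rep.mp h).2 ▸ hxy))

theorem Ingr.exists_of_ofList {k n : ℕ} {x : HMd A k} {l : List (HMd A n × ℕ)}
    (h : Ingr A x (HMd.ofList l)) : ∃ p ∈ l, IngrE x p.1 := by
  cases h with
  | mem h =>
    obtain ⟨p, hp, -, rfl⟩ := HMd.memb_ofList.mp h
    exact ⟨p, hp, .inr (hmEq_refl _)⟩
  | tail hxy h =>
    obtain ⟨p, hp, -, rfl⟩ := HMd.memb_ofList.mp h
    exact ⟨p, hp, .inl hxy⟩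

/-- Up to lifting, at most one ingredient of `t` (`t` included) has `f` as an urelement. -/
def RootUnique {n : ℕ} (t : HMd F n) (f : F) : Prop :=
  ∀ ⦃k₁ k₂ : ℕ⦄ ⦃x₁ : HMd F k₁⦄ ⦃x₂ : HMd F k₂⦄, IngrE x₁ t → 0 < x₁.acount f →
    IngrE x₂ t → 0 < x₂.acount f → hmEq x₁ x₂

theorem RootUnique.acount_eq_zero_of_ingr {n k : ℕ} {s : HMd F n} {f : F}
    (hs : RootUnique s f) (hpos : 0 < s.acount f) {x : HMd F k} (hx : Ingr F x s) :
    x.acount f = 0 := by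
  by_contra hx0
  have hxs := hs (.inl hx) (Nat.pos_of_ne_zero hx0) (.inr (hmEq_refl s)) hpos
  have := hx.count_flat_add_acount_le f
  rw [hxs.flat_eq] at this
  omega

theorem RootUnique.of_cover {m n : ℕ} {s : HMd F m} {t : HMd F n} {f : F}
    (hs : RootUnique s f) (hacount : t.acount f = s.acount f)
    (hcover : ∀ ⦃k : ℕ⦄ ⦃x : HMd F k⦄, IngrE x t → 0 < x.acount f →
      hmEq x t ∨ ∃ (k' : ℕ) (x' : HMd F k'), hmEq x x' ∧ Ingr F x' s) :
    RootUnique t f := by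
  have hbelow : ∀ ⦃k k' : ℕ⦄ ⦃x : HMd F k⦄ ⦃x' : HMd F k'⦄, hmEq x t → 0 < x.acount f →
      Ingr F x' s → x'.acount f = 0 := fun _ _ _ _ hxt hx hx's =>
    hs.acount_eq_zero_of_ingr (hacount ▸ hxt.acount_eq f ▸ hx) hx's
  intro k₁ k₂ x₁ x₂ h₁ a₁ h₂ a₂
  rcases hcover h₁ a₁ with e₁ | ⟨_, x₁', e₁, i₁⟩ <;> rcases hcover h₂ a₂ with e₂ | ⟨_, x₂', e₂, i₂⟩
  · exact e₁.trans e₂.symm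
  · exact absurd (e₂.acount_eq f ▸ a₂) (hbelow e₁ a₁ i₂).not_gt
  · exact absurd (e₁.acount_eq f ▸ a₁) (hbelow e₂ a₂ i₁).not_gt
  · exact e₁.trans ((hs (.inl i₁) (e₁.acount_eq f ▸ a₁) (.inl i₂) (e₂.acount_eq f ▸ a₂)).trans
      e₂.symm)

theorem RootUnique.single (n : ℕ) (a f : F) : RootUnique (HMd.single n a) f := by
  rintro _ _ _ _ (h₁ | e₁) - (h₂ | e₂) -
  · exact absurd h₁ (not_ingr_single n a)
  · exact absurd h₁ (not_ingr_single n a)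
  · exact absurd h₂ (not_ingr_single n a)
  · exact e₁.trans e₂.symm

theorem RootUnique.up {n : ℕ} {t : HMd F n} {f : F} (ht : RootUnique t f) :
    RootUnique (HMd.up n t) f :=
  ht.of_cover (HMd.acount_up n t f) fun _ _ hx _ => hx.imp_left Ingr.exists_of_up |>.symm

theorem RootUnique.add_rep {n : ℕ} {t₁ : HMd F (n + 1)} {t₂ : HMd F n} {f : F} (c : ℕ)
    (h₁ : RootUnique t₁ f) (h₂ : RootUnique t₂ f) (hd : FDisj t₁ t₂) :
    RootUnique (t₁ + HMd.rep c t₂) f := by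
  have hacount : HMd.acount (n := n + 1) f (t₁ + HMd.rep c t₂) = t₁.acount f := by
    rw [HMd.acount_add, HMd.acount_rep, Nat.add_zero]
  have hsplit : ∀ ⦃k : ℕ⦄ ⦃x : HMd F k⦄, IngrE x (t₁ + HMd.rep c t₂) →
      hmEq x (t₁ + HMd.rep c t₂) ∨ Ingr F x t₁ ∨ IngrE x t₂
    | _, _, .inl h => .inr h.of_add_rep
    | _, _, .inr h => .inl h
  by_cases hf : f ∈ t₁.flat
  · refine h₁.of_cover hacount fun k x hx ha => ?_
    rcases hsplit hx with e | i | i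
    · exact .inl e
    · exact .inr ⟨k, x, hmEq_refl x, i⟩
    · exact absurd (i.mem_flat (HMd.mem_flat_of_acount_pos ha)) (hd f hf)
  · have hin₂ : ∀ ⦃k : ℕ⦄ ⦃x : HMd F k⦄, IngrE x (t₁ + HMd.rep c t₂) → 0 < x.acount f →
        IngrE x t₂ := fun _ x hx ha => by
      rcases hsplit hx with e | i | i
      · exact absurd (HMd.mem_flat_of_acount_pos (hacount ▸ e.acount_eq f ▸ ha)) hf
      · exact absurd (IngrE.mem_flat (.inl i) (HMd.mem_flat_of_acount_pos ha)) hf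
      · exact i
    exact fun _ _ _ _ j₁ a₁ j₂ a₂ => h₂ (hin₂ j₁ a₁) a₁ (hin₂ j₂ a₂) a₂

theorem RootUnique.ofList {n : ℕ} {l : List (HMd F n × ℕ)} {f : F}
    (hl : ∀ p ∈ l, RootUnique p.1 f) (hpw : l.Pairwise fun p q => FDisj p.1 q.1) :
    RootUnique (HMd.ofList l) f := by
  have hin : ∀ ⦃k : ℕ⦄ ⦃x : HMd F k⦄, IngrE x (HMd.ofList l) → 0 < x.acount f →
      ∃ p ∈ l, IngrE x p.1 ∧ f ∈ p.1.flat := fun _ x hx ha => by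
    rcases hx with i | e
    · obtain ⟨p, hp, hxp⟩ := i.exists_of_ofList
      exact ⟨p, hp, hxp, hxp.mem_flat (HMd.mem_flat_of_acount_pos ha)⟩
    · exact absurd (HMd.acount_ofList f l ▸ e.acount_eq f ▸ ha) (lt_irrefl 0)
  intro k₁ k₂ x₁ x₂ h₁ a₁ h₂ a₂
  obtain ⟨p, hp, hxp, hfp⟩ := hin h₁ a₁
  obtain ⟨q, hq, hxq, hfq⟩ := hin h₂ a₂
  obtain rfl : p = q := by
    by_contra hpq
    have : Std.Symm fun p q : HMd F n × ℕ => FDisj p.1 q.1 := ⟨fun _ _ => FDisj.symm⟩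
    exact hpw.forall hp hq hpq f hfp hfq
  exact hl p hp hxp a₁ hxq a₂

theorem TreeLike.rootUnique {n : ℕ} {t : HMd F n} (ht : TreeLike F n t) (f : F) :
    RootUnique t f := by
  induction ht with
  | sing n a => exact .single n a f
  | up _ ih => exact ih.up
  | sol c _ _ hd ih₁ ih₂ => exact ih₁.add_rep c ih₂ hd
  | @grp n t l _ _ hd hpw ih ihl =>
    refine ih.up.add_rep 1 (.ofList ihl hpw) fun a hat hal => ?_
    obtain ⟨p, hp, -, hap⟩ := HMd.mem_flat_ofList.mp hal
    exact hd p hp a (HMd.flat_up (n + 1) t ▸ hat) hap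

theorem exists_ingr_of_ingr {k n : ℕ} {s : HMd F k} {t : HMd F n} {f : F}
    (hs : TreeLike F k s) (hst : Ingr F s t)
    (h : 0 < s.acount f ∨ ∃ (j : ℕ) (x : HMd F j), Ingr F x s ∧ TreeLike F j x ∧ 0 < x.acount f) :
    ∃ (j : ℕ) (x : HMd F j), Ingr F x t ∧ TreeLike F j x ∧ 0 < x.acount f := by
  rcases h with h | ⟨j, x, hxs, hx, hxf⟩
  · exact ⟨k, s, hst, hs, h⟩
  · exact ⟨j, x, hxs.trans hst, hx, hxf⟩

theorem TreeLike.acount_pos_or_exists_ingr {n : ℕ} {t : HMd F n} (ht : TreeLike F n t) {f : F}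
    (hf : f ∈ t.flat) :
    0 < t.acount f ∨ ∃ (k : ℕ) (x : HMd F k), Ingr F x t ∧ TreeLike F k x ∧ 0 < x.acount f := by
  induction ht with
  | sing n a =>
    obtain rfl := Multiset.mem_singleton.mp (HMd.flat_single n a ▸ hf)
    exact .inl (HMd.acount_single n f ▸ Nat.one_pos)
  | @up n t _ ih =>
    rw [HMd.acount_up]
    exact (ih (HMd.flat_up n t ▸ hf)).imp_right
      fun ⟨k, x, hxt, hx, hxf⟩ => ⟨k + 1, _, hxt.up, hx.up, HMd.acount_up k x f ▸ hxf⟩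
  | @sol n t₁ t₂ c _ ht₂ _ ih₁ ih₂ =>
    rw [HMd.acount_add, HMd.acount_rep, Nat.add_zero]
    rw [HMd.flat_add, Multiset.mem_add, HMd.flat_rep, Multiset.mem_nsmul] at hf
    rcases hf with hf | ⟨hc, hf⟩
    · exact (ih₁ hf).imp_right fun ⟨k, x, hxt, hx, hxf⟩ => ⟨k, x, hxt.add_right _, hx, hxf⟩
    · exact .inr (exists_ingr_of_ingr ht₂
        (.mem (Multiset.mem_add.mpr <| .inr <| (HMd.memb_rep.mpr ⟨hc, rfl⟩))) (ih₂ hf))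
  | @grp n t l _ htl _ _ ih ihl =>
    rw [HMd.acount_add, HMd.acount_rep, Nat.add_zero, HMd.acount_up]
    rw [HMd.flat_add, Multiset.mem_add, HMd.flat_rep, one_nsmul, HMd.flat_up,
      HMd.mem_flat_ofList] at hf
    rcases hf with hf | ⟨p, hp, hc, hf⟩
    · exact (ih hf).imp_right fun ⟨k, x, hxt, hx, hxf⟩ =>
        ⟨k + 1, _, hxt.up.add_right _, hx.up, HMd.acount_up k x f ▸ hxf⟩
    · have hpg : Ingr F p.1 (HMd.ofList l) := .mem (HMd.memb_ofList.mpr ⟨p, hp, hc, rfl⟩)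
      have hgt : (HMd.ofList l).Memb (HMd.up (n + 1) t + HMd.rep 1 (HMd.ofList l)) :=
        Multiset.mem_add.mpr <| .inr <| (HMd.memb_rep.mpr ⟨one_ne_zero, rfl⟩)
      exact .inr (exists_ingr_of_ingr (htl p hp) (.tail hpg hgt) (ihl p hp hf))

/-- for a tree-like multiset `t` and any `f` in the support of `flat t`,
there is a unique (up to lifting) ingredient of `t` (where `t` itself counts) that is a
tree-like multiset with root `f`. -/
theorem treelike_unique_induced (F : Type) (n : ℕ) (t : HMd F n) (ht : TreeLike F n t) :
    ∀ f ∈ HMd.flat t,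
      (∃ (k : ℕ) (x : HMd F k), IngrE x t ∧ TreeLike F k x ∧ 0 < HMd.acount f x) ∧
      (∀ (k₁ k₂ : ℕ) (x₁ : HMd F k₁) (x₂ : HMd F k₂),
        IngrE x₁ t → TreeLike F k₁ x₁ → 0 < HMd.acount f x₁ →
        IngrE x₂ t → TreeLike F k₂ x₂ → 0 < HMd.acount f x₂ → hmEq x₁ x₂) := by
  intro f hf
  refine ⟨?_, fun _ _ _ _ h₁ _ a₁ h₂ _ a₂ => ht.rootUnique f h₁ a₁ h₂ a₂⟩
  rcases ht.acount_pos_or_exists_ingr hf with h | ⟨k, x, hxt, hx, hxf⟩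
  · exact ⟨n, t, .inr (hmEq_refl t), ht, h⟩
  · exact ⟨k, x, .inl hxt, hx, hxf⟩

end
end CFDPaper
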